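/- Let $S$ be a finite set and let $A^1,\dots,A^m$ be compact Polish spaces. Fix a probability measure $\mu$ on $S$. Define $\Xi^\mu$ on the set of tuples $(\hat a^1,\dots,\hat a^m)$ of probability measures on $S\times A^i$ with $S$-marginal $\mu$ by $\Xi^\mu[\hat{\underline a}](\{s\}\times B_1\times\cdots\times B_m)=\mu(\{s\})\prod_{i=1}^m \hat a^i(B_i\mid s)$ (with the convention $\hat a^i(\cdot\mid s)$ arbitrary fixed when $\mu(\{s\})=0$). Then $\Xi^\mu$ is continuous for the weak topologies. -/

import Mathlib

/-!
Over a point `s` with `μ{s} > 0`, the reconstructed measure is `μ{s}` times the product of the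
conditional laws `â^i(· | s)`, and it puts no mass over points with `μ{s} = 0`. Since `S` is
discrete, `{s} × A^i` is clopen, so weak convergence of `â^i_n` (whose mass over `s` is the fixed
number `μ{s}`) gives weak convergence of the conditional laws. Finite products of probability
measures depend continuously on the factors (`ProbabilityMeasure.continuous_pi`), and summing
over the finitely many points of `S` concludes.
-/

open MeasureTheory ProbabilityTheory Filter Topology BoundedContinuousFunction

lemma MeasureTheory.Measure.eq_of_apply_singleton_eq_of_pos {S : Type*} [Fintype S]
    [MeasurableSpace S] [MeasurableSingletonClass S] {μ ν : Measure S} [IsProbabilityMeasure μ]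
    [IsProbabilityMeasure ν] (h : ∀ s, 0 < μ {s} → ν {s} = μ {s}) : μ = ν := by
  refine Measure.eq_of_le_of_isProbabilityMeasure (Measure.le_iff'.2 fun B => ?_)
  classical
  rw [← Set.coe_toFinset B, ← sum_measure_singleton, ← sum_measure_singleton]
  refine Finset.sum_le_sum fun s _ => ?_
  rcases eq_zero_or_pos (μ {s}) with hs | hs
  · simp [hs]
  · exact (h s hs).ge

section FiberLaw

variable {S X : Type*} [MeasurableSpace S] [MeasurableSpace X]

/-- The conditional law `ρ(· | s)` of the second coordinate given that the first one is `s`;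
it is the zero measure when `ρ` puts no mass over `s`. -/
noncomputable def fiberLaw (ρ : Measure (S × X)) (s : S) : Measure X :=
  (ρ[|Prod.fst ← s]).map Prod.snd

instance isZeroOrProbabilityMeasure_fiberLaw (ρ : Measure (S × X)) (s : S) :
    IsZeroOrProbabilityMeasure (fiberLaw ρ s) := by
  unfold fiberLaw
  infer_instance

lemma isProbabilityMeasure_fiberLaw (ρ : Measure (S × X)) [IsFiniteMeasure ρ] {s : S}
    (hs : ρ (Prod.fst ⁻¹' {s}) ≠ 0) : IsProbabilityMeasure (fiberLaw ρ s) := by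
  have := cond_isProbabilityMeasure (μ := ρ) hs
  exact Measure.isProbabilityMeasure_map measurable_snd.aemeasurable

variable [MeasurableSingletonClass S]

lemma measure_fst_preimage_singleton_of_map_fst {ρ : Measure (S × X)} {μ : Measure S}
    (h : ρ.map Prod.fst = μ) (s : S) : ρ (Prod.fst ⁻¹' {s}) = μ {s} := by
  rw [← h, Measure.map_apply measurable_fst (measurableSet_singleton s)]

lemma fiberLaw_apply (ρ : Measure (S × X)) (s : S) {B : Set X} (hB : MeasurableSet B) :
    fiberLaw ρ s B = (ρ (Prod.fst ⁻¹' {s}))⁻¹ * ρ ({s} ×ˢ B) := by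
  rw [fiberLaw, Measure.map_apply measurable_snd hB,
    cond_apply (measurable_fst (measurableSet_singleton s))]
  rfl

lemma integral_eq_sum_fiberLaw [Fintype S] [TopologicalSpace S] [OpensMeasurableSpace S]
    [TopologicalSpace X] [OpensMeasurableSpace X] (ρ : Measure (S × X)) [IsFiniteMeasure ρ]
    (g : S × X →ᵇ ℝ) :
    ∫ p, g p ∂ρ = ∑ s, (ρ (Prod.fst ⁻¹' {s})).toReal * ∫ x, g (s, x) ∂fiberLaw ρ s := by
  conv_lhs => rw [← sum_meas_smul_cond_fiber measurable_fst ρ]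
  rw [integral_finsetSum_measure fun s _ => (g.integrable _).smul_measure (measure_ne_top _ _)]
  refine Finset.sum_congr rfl fun s _ => ?_
  rw [integral_smul_measure, smul_eq_mul, fiberLaw, integral_map (f := fun x => g (s, x))
    measurable_snd.aemeasurable (g.continuous.comp (.prodMk_right s)).aestronglyMeasurable]
  congr 1
  refine integral_congr_ae ?_
  filter_upwards [ae_cond_mem (measurable_fst (measurableSet_singleton s))] with p hp
  rw [← hp]

end FiberLaw

section WeakConvergence

variable {γ : Type*} {F : Filter γ}

lemma tendsto_integral_fiberLaw {S X : Type*} [Fintype S] [TopologicalSpace S]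
    [DiscreteTopology S] [MeasurableSpace S] [MeasurableSingletonClass S]
    [TopologicalSpace X] [MeasurableSpace X] [OpensMeasurableSpace X]
    {ρs : γ → Measure (S × X)} {ρ : Measure (S × X)} [∀ n, IsFiniteMeasure (ρs n)]
    [IsFiniteMeasure ρ]
    (h : ∀ g : S × X →ᵇ ℝ, Tendsto (fun n => ∫ p, g p ∂ρs n) F (𝓝 (∫ p, g p ∂ρ)))
    {s : S} (hs₀ : ρ (Prod.fst ⁻¹' {s}) ≠ 0)
    (hs : ∀ n, ρs n (Prod.fst ⁻¹' {s}) = ρ (Prod.fst ⁻¹' {s})) (f : X →ᵇ ℝ) :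
    Tendsto (fun n => ∫ x, f x ∂fiberLaw (ρs n) s) F (𝓝 (∫ x, f x ∂fiberLaw ρ s)) := by
  classical
  let δ : S →ᵇ ℝ := mkOfCompact ⟨fun u => if u = s then 1 else 0, continuous_of_discreteTopology⟩
  let g : S × X →ᵇ ℝ := δ.compContinuous .fst * f.compContinuous .snd
  have hg : ∀ (ν : Measure (S × X)) [IsFiniteMeasure ν],
      ∫ p, g p ∂ν = (ν (Prod.fst ⁻¹' {s})).toReal * ∫ x, f x ∂fiberLaw ν s := by
    intro ν _
    rw [integral_eq_sum_fiberLaw, Finset.sum_eq_single s (fun u _ hu => by simp [g, δ, hu])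
      (by simp)]
    simp [g, δ]
  have hc : (ρ (Prod.fst ⁻¹' {s})).toReal ≠ 0 :=
    ENNReal.toReal_ne_zero.2 ⟨hs₀, measure_ne_top _ _⟩
  simpa [hg, hs, inv_mul_cancel_left₀ hc] using (h g).const_mul (ρ (Prod.fst ⁻¹' {s})).toReal⁻¹

lemma tendsto_integral_pi {ι : Type*} [Fintype ι] {X : ι → Type*}
    [∀ i, TopologicalSpace (X i)] [∀ i, MeasurableSpace (X i)] [∀ i, OpensMeasurableSpace (X i)]
    [∀ i, SecondCountableTopology (X i)] [∀ i, TopologicalSpace.PseudoMetrizableSpace (X i)]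
    {νs : γ → ∀ i, Measure (X i)} {ν : ∀ i, Measure (X i)}
    [∀ n i, IsProbabilityMeasure (νs n i)] [∀ i, IsProbabilityMeasure (ν i)]
    (h : ∀ i, ∀ f : X i →ᵇ ℝ, Tendsto (fun n => ∫ x, f x ∂νs n i) F (𝓝 (∫ x, f x ∂ν i)))
    (f : (∀ i, X i) →ᵇ ℝ) :
    Tendsto (fun n => ∫ x, f x ∂Measure.pi (νs n)) F (𝓝 (∫ x, f x ∂Measure.pi ν)) := by
  let P : γ → ∀ i, ProbabilityMeasure (X i) := fun n i => ⟨νs n i, inferInstance⟩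
  let P₀ : ∀ i, ProbabilityMeasure (X i) := fun i => ⟨ν i, inferInstance⟩
  have hP : Tendsto P F (𝓝 P₀) :=
    tendsto_pi_nhds.2 fun i => ProbabilityMeasure.tendsto_iff_forall_integral_tendsto.2 (h i)
  exact ProbabilityMeasure.tendsto_iff_forall_integral_tendsto.1
    ((ProbabilityMeasure.continuous_pi.tendsto P₀).comp hP) f

end WeakConvergence

section Reconstruction

variable {ι S : Type*} [Fintype ι] {A : ι → Type*} [∀ i, MeasurableSpace (A i)]
  [MeasurableSpace S] [MeasurableSingletonClass S]

/-- `ρ = Ξ^μ[a]`, through the defining formula on measurable rectangles. -/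
def IsReconstruction (μ : Measure S) (a : ∀ i, Measure (S × A i))
    (ρ : Measure (S × ∀ i, A i)) : Prop :=
  ∀ s, 0 < μ {s} → ∀ B : ∀ i, Set (A i), (∀ i, MeasurableSet (B i)) →
    ρ ({s} ×ˢ Set.univ.pi B) = μ {s} * ∏ i, (a i ({s} ×ˢ B i) / μ {s})

variable {μ : Measure S} {a : ∀ i, Measure (S × A i)} {ρ : Measure (S × ∀ i, A i)}

lemma IsReconstruction.measure_fst_preimage [IsFiniteMeasure μ] (h : IsReconstruction μ a ρ)
    (ha : ∀ i, (a i).map Prod.fst = μ) {s : S} (hs : 0 < μ {s}) :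
    ρ (Prod.fst ⁻¹' {s}) = μ {s} := by
  have hai : ∀ i, a i (Prod.fst ⁻¹' {s}) / μ {s} = 1 := fun i => by
    rw [measure_fst_preimage_singleton_of_map_fst (ha i),
      ENNReal.div_self hs.ne' (measure_ne_top _ _)]
  simpa [Set.prod_univ, hai] using h s hs (fun _ => Set.univ) fun _ => .univ

lemma IsReconstruction.map_fst [Fintype S] [IsProbabilityMeasure μ] [IsProbabilityMeasure ρ]
    (h : IsReconstruction μ a ρ) (ha : ∀ i, (a i).map Prod.fst = μ) : ρ.map Prod.fst = μ := by
  have := Measure.isProbabilityMeasure_map (μ := ρ) measurable_fst.aemeasurable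
  refine (Measure.eq_of_apply_singleton_eq_of_pos fun s hs => ?_).symm
  rw [Measure.map_apply measurable_fst (measurableSet_singleton s), h.measure_fst_preimage ha hs]

lemma IsReconstruction.fiberLaw_eq_pi [IsFiniteMeasure μ] (h : IsReconstruction μ a ρ)
    (ha : ∀ i, (a i).map Prod.fst = μ) {s : S} (hs : 0 < μ {s}) :
    fiberLaw ρ s = Measure.pi fun i => fiberLaw (a i) s := by
  have hs₀ := hs.ne'
  have hs_top := measure_ne_top μ {s}
  refine (Measure.pi_eq fun B hB => ?_).symm
  rw [fiberLaw_apply _ _ (MeasurableSet.univ_pi hB), h.measure_fst_preimage ha hs, h s hs B hB,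
    ← mul_assoc, ENNReal.inv_mul_cancel hs₀ hs_top, one_mul]
  refine Finset.prod_congr rfl fun i _ => ?_
  rw [fiberLaw_apply _ _ (hB i), measure_fst_preimage_singleton_of_map_fst (ha i),
    ENNReal.div_eq_inv_mul]

lemma IsReconstruction.integral_eq_sum [Fintype S] [TopologicalSpace S] [OpensMeasurableSpace S]
    [∀ i, TopologicalSpace (A i)] [OpensMeasurableSpace (∀ i, A i)]
    [IsProbabilityMeasure μ] [IsProbabilityMeasure ρ]
    (h : IsReconstruction μ a ρ) (ha : ∀ i, (a i).map Prod.fst = μ) (g : S × (∀ i, A i) →ᵇ ℝ) :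
    ∫ p, g p ∂ρ = ∑ s, (μ {s}).toReal * ∫ x, g (s, x) ∂Measure.pi fun i => fiberLaw (a i) s := by
  rw [integral_eq_sum_fiberLaw]
  refine Finset.sum_congr rfl fun s _ => ?_
  rw [measure_fst_preimage_singleton_of_map_fst (h.map_fst ha)]
  rcases eq_zero_or_pos (μ {s}) with hs | hs
  · simp [hs]
  · rw [h.fiberLaw_eq_pi ha hs]

end Reconstruction

theorem Xi_continuous_general
    {m : ℕ}
    {S : Type*} [Fintype S] [TopologicalSpace S] [DiscreteTopology S]
    [MeasurableSpace S] [BorelSpace S]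
    {A : Fin m → Type*} [∀ i, TopologicalSpace (A i)] [∀ i, PolishSpace (A i)]
    [∀ i, MeasurableSpace (A i)] [∀ i, BorelSpace (A i)]
    (μ : Measure S) [IsProbabilityMeasure μ]
    (ahat : ℕ → ∀ i, Measure (S × A i)) (alim : ∀ i, Measure (S × A i))
    (hprobn : ∀ n i, IsProbabilityMeasure (ahat n i))
    (hprob : ∀ i, IsProbabilityMeasure (alim i))
    (hmargn : ∀ n i, (ahat n i).map Prod.fst = μ)
    (hmarg : ∀ i, (alim i).map Prod.fst = μ)
    (abar : ℕ → Measure (S × (∀ i, A i))) (abarlim : Measure (S × (∀ i, A i)))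
    (hprobbarn : ∀ n, IsProbabilityMeasure (abar n))
    (hprobbar : IsProbabilityMeasure abarlim)
    -- the reconstruction formula on measurable rectangles, for `μ{s} > 0`:
    (hXin : ∀ n, ∀ s : S, 0 < μ {s} →
      ∀ B : ∀ i, Set (A i), (∀ i, MeasurableSet (B i)) →
        abar n ({s} ×ˢ Set.univ.pi B) =
          μ {s} * ∏ i, (ahat n i ({s} ×ˢ B i) / μ {s}))
    (hXi : ∀ s : S, 0 < μ {s} →
      ∀ B : ∀ i, Set (A i), (∀ i, MeasurableSet (B i)) →
        abarlim ({s} ×ˢ Set.univ.pi B) =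
          μ {s} * ∏ i, (alim i ({s} ×ˢ B i) / μ {s}))
    -- weak convergence of the inputs:
    (hweak : ∀ i, ∀ g : BoundedContinuousFunction (S × A i) ℝ,
      Tendsto (fun n => ∫ p, g p ∂(ahat n i)) atTop (𝓝 (∫ p, g p ∂(alim i)))) :
    -- weak convergence of the reconstructed joint measures:
    ∀ g : BoundedContinuousFunction (S × (∀ i, A i)) ℝ,
      Tendsto (fun n => ∫ p, g p ∂(abar n)) atTop (𝓝 (∫ p, g p ∂abarlim)) := by
  intro g
  simp_rw [IsReconstruction.integral_eq_sum (hXin _) (hmargn _),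
    IsReconstruction.integral_eq_sum hXi hmarg]
  refine tendsto_finsetSum _ fun s _ => ?_
  rcases eq_zero_or_pos (μ {s}) with hs | hs
  · simp [hs]
  have hmassn := fun n i => measure_fst_preimage_singleton_of_map_fst (hmargn n i) s
  have hmass := fun i => measure_fst_preimage_singleton_of_map_fst (hmarg i) s
  have := fun n i => isProbabilityMeasure_fiberLaw (ahat n i) ((hmassn n i).trans_ne hs.ne')
  have := fun i => isProbabilityMeasure_fiberLaw (alim i) ((hmass i).trans_ne hs.ne')
  exact (tendsto_integral_pi (fun i => tendsto_integral_fiberLaw (hweak i)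
    ((hmass i).trans_ne hs.ne') fun n => (hmassn n i).trans (hmass i).symm)
    (g.compContinuous (.prodMk (.const _ s) (.id _)))).const_mul _

/-- Let `S` be finite and `A 1, …, A m` compact Polish spaces; fix
a probability measure `μ` on `S`. The reconstruction map `Ξ^μ`, defined on
tuples `(â^1, …, â^m)` of probability measures on `S × A i` with `S`-marginal
`μ` by `Ξ^μ[â]({s} × Π B i) = μ{s} ∏ i, â^i(B i | s)`, is continuous for the
weak topologies: if `â_n^i → â^i` weakly for each `i`, and `ā_n`, `ā` are the
measures given by the reconstruction formula from `â_n` resp. `â`, then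
`ā_n → ā` weakly. -/
theorem Xi_continuous
    {m : ℕ}
    {S : Type*} [Fintype S] [TopologicalSpace S] [DiscreteTopology S]
    [MeasurableSpace S] [BorelSpace S]
    {A : Fin m → Type*} [∀ i, TopologicalSpace (A i)] [∀ i, PolishSpace (A i)]
    [∀ i, CompactSpace (A i)] [∀ i, MeasurableSpace (A i)] [∀ i, BorelSpace (A i)]
    (μ : Measure S) [IsProbabilityMeasure μ]
    (ahat : ℕ → ∀ i, Measure (S × A i)) (alim : ∀ i, Measure (S × A i))
    (hprobn : ∀ n i, IsProbabilityMeasure (ahat n i))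
    (hprob : ∀ i, IsProbabilityMeasure (alim i))
    (hmargn : ∀ n i, (ahat n i).map Prod.fst = μ)
    (hmarg : ∀ i, (alim i).map Prod.fst = μ)
    (abar : ℕ → Measure (S × (∀ i, A i))) (abarlim : Measure (S × (∀ i, A i)))
    (hprobbarn : ∀ n, IsProbabilityMeasure (abar n))
    (hprobbar : IsProbabilityMeasure abarlim)
    -- the reconstruction formula on measurable rectangles, for `μ{s} > 0`:
    (hXin : ∀ n, ∀ s : S, 0 < μ {s} →
      ∀ B : ∀ i, Set (A i), (∀ i, MeasurableSet (B i)) →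
        abar n ({s} ×ˢ Set.univ.pi B) =
          μ {s} * ∏ i, (ahat n i ({s} ×ˢ B i) / μ {s}))
    (hXi : ∀ s : S, 0 < μ {s} →
      ∀ B : ∀ i, Set (A i), (∀ i, MeasurableSet (B i)) →
        abarlim ({s} ×ˢ Set.univ.pi B) =
          μ {s} * ∏ i, (alim i ({s} ×ˢ B i) / μ {s}))
    -- weak convergence of the inputs:
    (hweak : ∀ i, ∀ g : BoundedContinuousFunction (S × A i) ℝ,
      Tendsto (fun n => ∫ p, g p ∂(ahat n i)) atTop (𝓝 (∫ p, g p ∂(alim i)))) :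
    -- weak convergence of the reconstructed joint measures:
    ∀ g : BoundedContinuousFunction (S × (∀ i, A i)) ℝ,
      Tendsto (fun n => ∫ p, g p ∂(abar n)) atTop (𝓝 (∫ p, g p ∂abarlim)) :=
  Xi_continuous_general μ ahat alim hprobn hprob hmargn hmarg abar abarlim hprobbarn hprobbar hXin
    hXi hweak
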